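/- There exists a sequence u : ℕ^n → K with ann(u) = I if and only if Q* is a cyclic Q-module, i.e., there exists λ in Q* with Q* = Q·λ (equivalently, Q is a Gorenstein ring). -/

import Mathlib

/-!
A sequence `u` is the same thing as the linear form `f ↦ ⟨u | f⟩` on `K[X]`, and `f·u = 0`
exactly when this form vanishes on the ideal `(f)`. Hence `ann(u) = I` forces the form to
factor through some `λ ∈ Q*` for which the bilinear form `(a, b) ↦ λ(ab)` on `Q` is
nondegenerate, and conversely such a `λ` gives the sequence `u_λ` with `ann(u_λ) = I`.
As `Q` is finite-dimensional, nondegeneracy of `g ↦ λ(g ·) : Q → Q*` is the same as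
surjectivity, i.e. `Q* = Q·λ`.
-/

open MvPolynomial

/-- `⟨u ∣ f⟩ = ∑_m f_m u(m)`, the pairing of a sequence `u : ℕ^n → K`
with a polynomial `f ∈ K[X_1,…,X_n]`. -/
noncomputable def seqBracket {K : Type*} [Field K] {n : ℕ}
    (u : (Fin n →₀ ℕ) → K) (f : MvPolynomial (Fin n) K) : K :=
  (AddMonoidAlgebra.coeff f).sum fun m c => c * u m

/-- The action of polynomials on sequences: `(f·u)(m) = ⟨u ∣ X^m f⟩`. -/
noncomputable def seqAct {K : Type*} [Field K] {n : ℕ}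
    (f : MvPolynomial (Fin n) K) (u : (Fin n →₀ ℕ) → K) : (Fin n →₀ ℕ) → K :=
  fun m => seqBracket u (monomial m 1 * f)

/-- The sequence `u_ℓ(m) = ℓ(X^m mod I)` attached to a linear form `ℓ` on `K[X]/I`. -/
noncomputable def useq {K : Type*} [Field K] {n : ℕ}
    (I : Ideal (MvPolynomial (Fin n) K))
    (ℓ : Module.Dual K (MvPolynomial (Fin n) K ⧸ I)) : (Fin n →₀ ℕ) → K :=
  fun m => ℓ (Ideal.Quotient.mk I (monomial m 1))

theorem LinearMap.surjective_iff_separatingLeft {K V : Type*} [Field K] [AddCommGroup V]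
    [Module K V] [FiniteDimensional K V] (B : V →ₗ[K] V →ₗ[K] K) :
    Function.Surjective B ↔ B.SeparatingLeft := by
  rw [separatingLeft_iff_ker_eq_bot, ker_eq_bot,
    injective_iff_surjective_of_finrank_eq_finrank Subspace.dual_finrank_eq.symm]

section

variable {K : Type*} [Field K] {n : ℕ}

noncomputable def seqBracketₗ (u : (Fin n →₀ ℕ) → K) :
    MvPolynomial (Fin n) K →ₗ[K] K :=
  (Finsupp.linearCombination K u).comp (AddMonoidAlgebra.coeffLinearEquiv K).toLinearMap

theorem seqBracketₗ_apply (u : (Fin n →₀ ℕ) → K) (f : MvPolynomial (Fin n) K) :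
    seqBracketₗ u f = seqBracket u f :=
  rfl

theorem seqBracketₗ_monomial (u : (Fin n →₀ ℕ) → K) (m : Fin n →₀ ℕ) :
    seqBracketₗ u (monomial m 1) = u m := by
  change Finsupp.linearCombination K u (Finsupp.single m 1) = u m
  simp

theorem seqBracketₗ_comp_monomial (L : MvPolynomial (Fin n) K →ₗ[K] K) :
    seqBracketₗ (fun m => L (monomial m 1)) = L := by
  ext m
  exact seqBracketₗ_monomial _ m

theorem seqAct_apply_zero (f : MvPolynomial (Fin n) K) (u : (Fin n →₀ ℕ) → K) :
    seqAct f u 0 = seqBracket u f := by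
  rw [seqAct, monomial_zero', C_1, one_mul]

theorem seqAct_eq_zero_iff (L : MvPolynomial (Fin n) K →ₗ[K] K) (f : MvPolynomial (Fin n) K) :
    seqAct f (fun m => L (monomial m 1)) = 0 ↔ ∀ h, L (h * f) = 0 := by
  have hact : ∀ m, seqAct f (fun m => L (monomial m 1)) m = L (monomial m 1 * f) := fun m => by
    rw [seqAct, ← seqBracketₗ_apply, seqBracketₗ_comp_monomial]
  refine ⟨fun hf h => ?_, fun hf => funext fun m => (hact m).trans (hf _)⟩
  have hmul : L ∘ₗ LinearMap.mulRight K f = 0 := by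
    ext m
    exact (hact m).symm.trans (congrFun hf m)
  exact LinearMap.congr_fun hmul h

theorem useq_eq_monomial (I : Ideal (MvPolynomial (Fin n) K))
    (lam : Module.Dual K (MvPolynomial (Fin n) K ⧸ I)) :
    useq I lam = fun m => (lam ∘ₗ (Ideal.Quotient.mkₐ K I).toLinearMap) (monomial m 1) :=
  rfl

theorem seqAct_useq_eq_zero_iff (I : Ideal (MvPolynomial (Fin n) K))
    (lam : Module.Dual K (MvPolynomial (Fin n) K ⧸ I)) (f : MvPolynomial (Fin n) K) :
    seqAct f (useq I lam) = 0 ↔ ∀ b, lam (Ideal.Quotient.mk I f * b) = 0 := by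
  rw [useq_eq_monomial, seqAct_eq_zero_iff, Ideal.Quotient.mk_surjective.forall]
  simp [Ideal.Quotient.mkₐ_eq_mk, mul_comm]

theorem ann_useq_iff_separatingLeft (I : Ideal (MvPolynomial (Fin n) K))
    (lam : Module.Dual K (MvPolynomial (Fin n) K ⧸ I)) :
    (∀ f, seqAct f (useq I lam) = 0 ↔ f ∈ I) ↔
      ((LinearMap.mul K (MvPolynomial (Fin n) K ⧸ I)).compr₂ lam).SeparatingLeft := by
  simp only [seqAct_useq_eq_zero_iff, LinearMap.SeparatingLeft, LinearMap.compr₂_apply,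
    LinearMap.mul_apply', ← Ideal.Quotient.eq_zero_iff_mem]
  refine ⟨fun h a ha => ?_, fun h f => ⟨h _, fun hf b => by rw [hf, zero_mul, map_zero]⟩⟩
  obtain ⟨f, rfl⟩ := Ideal.Quotient.mk_surjective a
  exact (h f).1 ha

theorem exists_useq_eq (I : Ideal (MvPolynomial (Fin n) K)) (u : (Fin n →₀ ℕ) → K)
    (hu : ∀ f ∈ I, seqBracket u f = 0) : ∃ lam, useq I lam = u :=
  ⟨(I.restrictScalars K).liftQ (seqBracketₗ u) hu ∘ₗ
    (Submodule.Quotient.restrictScalarsEquiv K I).symm.toLinearMap,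
    funext (seqBracketₗ_monomial u)⟩

theorem exists_ann_eq_iff_exists_useq (I : Ideal (MvPolynomial (Fin n) K)) :
    (∃ u : (Fin n →₀ ℕ) → K, ∀ f, seqAct f u = 0 ↔ f ∈ I) ↔
      ∃ lam, ∀ f, seqAct f (useq I lam) = 0 ↔ f ∈ I := by
  refine ⟨fun ⟨u, hu⟩ => ?_, fun ⟨lam, hlam⟩ => ⟨_, hlam⟩⟩
  obtain ⟨lam, rfl⟩ := exists_useq_eq I u fun f hf => by
    rw [← seqAct_apply_zero, (hu f).2 hf, Pi.zero_apply]
  exact ⟨lam, hu⟩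

end

theorem stmt5_general {K : Type*} [Field K] {n : ℕ}
    (I : Ideal (MvPolynomial (Fin n) K))
    (hI : FiniteDimensional K (MvPolynomial (Fin n) K ⧸ I)) :
    (∃ u : (Fin n →₀ ℕ) → K, ∀ f : MvPolynomial (Fin n) K,
        seqAct f u = 0 ↔ f ∈ I) ↔
    (∃ lam : Module.Dual K (MvPolynomial (Fin n) K ⧸ I),
        ∀ φ : Module.Dual K (MvPolynomial (Fin n) K ⧸ I),
          ∃ g : MvPolynomial (Fin n) K ⧸ I,
            φ = lam.comp (LinearMap.mulLeft K g)) := by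
  have := hI
  calc (∃ u : (Fin n →₀ ℕ) → K, ∀ f, seqAct f u = 0 ↔ f ∈ I)
      ↔ ∃ lam, ∀ f, seqAct f (useq I lam) = 0 ↔ f ∈ I :=
        exists_ann_eq_iff_exists_useq I
    _ ↔ ∃ lam, ((LinearMap.mul K (MvPolynomial (Fin n) K ⧸ I)).compr₂ lam).SeparatingLeft :=
        exists_congr (ann_useq_iff_separatingLeft I)
    _ ↔ ∃ lam,
        Function.Surjective ((LinearMap.mul K (MvPolynomial (Fin n) K ⧸ I)).compr₂ lam) :=
        exists_congr fun _ => (LinearMap.surjective_iff_separatingLeft _).symm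
    _ ↔ _ := exists_congr fun _ => forall_congr' fun _ => exists_congr fun _ => eq_comm

/-- There exists a sequence `u : ℕ^n → K` with `ann(u) = I`
if and only if `Q*` is a cyclic `Q`-module: there is `λ ∈ Q*` with
`Q* = Q·λ`, i.e. every `φ ∈ Q*` equals `g·λ` for some `g ∈ Q`
(equivalently, `Q` is Gorenstein). -/
theorem stmt5 {K : Type*} [Field K] {n : ℕ} (hn : 1 ≤ n)
    (I : Ideal (MvPolynomial (Fin n) K))
    (hI : FiniteDimensional K (MvPolynomial (Fin n) K ⧸ I)) :
    (∃ u : (Fin n →₀ ℕ) → K, ∀ f : MvPolynomial (Fin n) K,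
        seqAct f u = 0 ↔ f ∈ I) ↔
    (∃ lam : Module.Dual K (MvPolynomial (Fin n) K ⧸ I),
        ∀ φ : Module.Dual K (MvPolynomial (Fin n) K ⧸ I),
          ∃ g : MvPolynomial (Fin n) K ⧸ I,
            φ = lam.comp (LinearMap.mulLeft K g)) :=
  stmt5_general I hI
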